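/- Let L ∈ ℝ^{ν×ν}⟨x,x*⟩ be a linear pencil. The following are equivalent: (i) the L-real radical of the zero left ideal {0} ⊆ ℝ⟨x,x*⟩ is all of ℝ⟨x,x*⟩; (ii) the linear matrix inequality L(x) ⪰ 0 is infeasible over ℝ^g (i.e., there is no x ∈ ℝ^g, evaluated as a tuple of 1×1 matrices, with L(x) ⪰ 0); (iii) for every n, the linear matrix inequality L(X) ⪰ 0 is infeasible over g-tuples X of real n×n matrices. -/

import Mathlib

open scoped BigOperators
open Matrix

/-- The `2g` free letters: `Sum.inl i` is `xᵢ`, `Sum.inr i` is `xᵢ*`. -/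
abbrev Lttr (g : ℕ) := Fin g ⊕ Fin g

/-- The free real algebra `ℝ⟨x,x*⟩` on `2g` letters. -/
abbrev FreePoly (g : ℕ) := FreeAlgebra ℝ (Lttr g)

noncomputable def xvar {g : ℕ} (i : Fin g) : FreePoly g := FreeAlgebra.ι ℝ (Sum.inl i)

noncomputable def xstar {g : ℕ} (i : Fin g) : FreePoly g := FreeAlgebra.ι ℝ (Sum.inr i)

/-- The involution `*` on `ℝ⟨x,x*⟩`: linear, reverses products, swaps `xᵢ` and `xᵢ*`. -/
noncomputable def pstar {g : ℕ} (p : FreePoly g) : FreePoly g :=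
  MulOpposite.unop
    (FreeAlgebra.lift ℝ
      (fun l : Lttr g => MulOpposite.op (FreeAlgebra.ι ℝ (Sum.swap l))) p)

/-- Evaluation of a noncommutative polynomial at a `g`-tuple of real `n × n` matrices,
sending `xᵢ` to `X i` and `xᵢ*` to `(X i)ᵀ`. -/
noncomputable def evalP {g n : ℕ} (X : Fin g → Matrix (Fin n) (Fin n) ℝ) :
    FreePoly g →ₐ[ℝ] Matrix (Fin n) (Fin n) ℝ :=
  FreeAlgebra.lift ℝ (Sum.elim X (fun i => (X i)ᵀ))

/-- Entrywise (block) evaluation of a `ν × ℓ` matrix polynomial. -/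
noncomputable def evalM {g n ν ℓ : ℕ} (X : Fin g → Matrix (Fin n) (Fin n) ℝ)
    (p : Matrix (Fin ν) (Fin ℓ) (FreePoly g)) :
    Matrix (Fin ν × Fin n) (Fin ℓ × Fin n) ℝ :=
  fun ir js => evalP X (p ir.1 js.1) ir.2 js.2

/-- Evaluation of a row vector of polynomials (an element of `ℝ^{1×ℓ}⟨x,x*⟩`). -/
noncomputable def evalRow {g n ℓ : ℕ} (X : Fin g → Matrix (Fin n) (Fin n) ℝ)
    (p : Fin ℓ → FreePoly g) : Matrix (Fin n) (Fin ℓ × Fin n) ℝ :=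
  fun r js => evalP X (p js.1) r js.2

/-- The involution on matrices of polynomials: entrywise `*` combined with transpose. -/
noncomputable def starM {g a b : ℕ} (p : Matrix (Fin a) (Fin b) (FreePoly g)) :
    Matrix (Fin b) (Fin a) (FreePoly g) :=
  fun i j => pstar (p j i)

/-- For a row vector `p ∈ ℝ^{1×ℓ}⟨x,x*⟩`, the `ℓ × ℓ` matrix `p*p`. -/
noncomputable def sqForm {g ℓ : ℕ} (p : Fin ℓ → FreePoly g) :
    Matrix (Fin ℓ) (Fin ℓ) (FreePoly g) :=
  fun a b => pstar (p a) * p b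

/-- For `q ∈ ℝ^{ν×ℓ}⟨x,x*⟩`, the `ℓ × ℓ` matrix `q*Lq`. -/
noncomputable def quadForm {g ν ℓ : ℕ} (L : Matrix (Fin ν) (Fin ν) (FreePoly g))
    (q : Matrix (Fin ν) (Fin ℓ) (FreePoly g)) : Matrix (Fin ℓ) (Fin ℓ) (FreePoly g) :=
  starM q * L * q

/-- For row vectors `r, ι ∈ ℝ^{1×ℓ}⟨x,x*⟩`, the `ℓ × ℓ` matrix `r*ι`. -/
noncomputable def outerStar {g ℓ : ℕ} (r ι : Fin ℓ → FreePoly g) :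
    Matrix (Fin ℓ) (Fin ℓ) (FreePoly g) :=
  fun a b => pstar (r a) * ι b

/-- `m ∈ ℝ^{a×1}I`: every row of the matrix polynomial `m` lies in the left module `I`. -/
def rowsInM {g a ℓ : ℕ} (I : Submodule (FreePoly g) (Fin ℓ → FreePoly g))
    (m : Matrix (Fin a) (Fin ℓ) (FreePoly g)) : Prop :=
  ∀ i, m i ∈ I

/-- Every row of the matrix polynomial `m` lies in the real subspace `C`. -/
def rowsInR {g a ℓ : ℕ} (C : Submodule ℝ (Fin ℓ → FreePoly g))
    (m : Matrix (Fin a) (Fin ℓ) (FreePoly g)) : Prop :=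
  ∀ i, m i ∈ C

/-- The set `ℝ^{ℓ×1}I + I*ℝ^{1×ℓ}` of `ℓ × ℓ` matrix polynomials. -/
def modPlusStar {g ℓ : ℕ} (I : Submodule (FreePoly g) (Fin ℓ → FreePoly g)) :
    Set (Matrix (Fin ℓ) (Fin ℓ) (FreePoly g)) :=
  { m | ∃ u v : Matrix (Fin ℓ) (Fin ℓ) (FreePoly g),
      rowsInM I u ∧ rowsInM I v ∧ m = u + starM v }

/-- `I` is an `L`-real left module. -/
def IsLReal {g ν ℓ : ℕ} (L : Matrix (Fin ν) (Fin ν) (FreePoly g))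
    (I : Submodule (FreePoly g) (Fin ℓ → FreePoly g)) : Prop :=
  ∀ (a b : ℕ) (p : Fin a → (Fin ℓ → FreePoly g))
    (q : Fin b → Matrix (Fin ν) (Fin ℓ) (FreePoly g)),
    ((∑ i, sqForm (p i)) + ∑ j, quadForm L (q j)) ∈ modPlusStar I →
    (∀ i, p i ∈ I) ∧ ∀ j, rowsInM I (L * q j)

/-- `I` is a strongly `L`-real left module. -/
def IsLRealStrong {g ν ℓ : ℕ} (L : Matrix (Fin ν) (Fin ν) (FreePoly g))
    (I : Submodule (FreePoly g) (Fin ℓ → FreePoly g)) : Prop :=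
  ∀ (a b : ℕ) (p : Fin a → (Fin ℓ → FreePoly g))
    (q : Fin b → Matrix (Fin ν) (Fin ℓ) (FreePoly g)),
    ((∑ i, sqForm (p i)) + ∑ j, quadForm L (q j)) ∈ modPlusStar I →
    (∀ i, p i ∈ I) ∧ ∀ j, rowsInM I (q j)

/-- `I` is a real left module. -/
def IsRealMod {g ℓ : ℕ} (I : Submodule (FreePoly g) (Fin ℓ → FreePoly g)) : Prop :=
  ∀ (a : ℕ) (p : Fin a → (Fin ℓ → FreePoly g)),
    (∑ i, sqForm (p i)) ∈ modPlusStar I → ∀ i, p i ∈ I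

/-- The `L`-real radical of `I`: the smallest `L`-real left module containing `I`. -/
noncomputable def Lrad {g ν ℓ : ℕ} (L : Matrix (Fin ν) (Fin ν) (FreePoly g))
    (I : Submodule (FreePoly g) (Fin ℓ → FreePoly g)) :
    Submodule (FreePoly g) (Fin ℓ → FreePoly g) :=
  sInf { J | I ≤ J ∧ IsLReal L J }

/-- The strong `L`-real radical of `I`. -/
noncomputable def LradStrong {g ν ℓ : ℕ} (L : Matrix (Fin ν) (Fin ν) (FreePoly g))
    (I : Submodule (FreePoly g) (Fin ℓ → FreePoly g)) :
    Submodule (FreePoly g) (Fin ℓ → FreePoly g) :=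
  sInf { J | I ≤ J ∧ IsLRealStrong L J }

/-- The real radical of `I`: the smallest real left module containing `I`. -/
noncomputable def realRad {g ℓ : ℕ} (I : Submodule (FreePoly g) (Fin ℓ → FreePoly g)) :
    Submodule (FreePoly g) (Fin ℓ → FreePoly g) :=
  sInf { J | I ≤ J ∧ IsRealMod J }

/-- The word `w` as a product of letters in `ℝ⟨x,x*⟩`. -/
noncomputable def fword {g : ℕ} (w : List (Lttr g)) : FreePoly g :=
  (w.map (FreeAlgebra.ι ℝ)).prod

/-- The subspace of polynomials of degree at most `d`. -/
noncomputable def degLE (g d : ℕ) : Submodule ℝ (FreePoly g) :=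
  Submodule.span ℝ { p | ∃ w : List (Lttr g), w.length ≤ d ∧ p = fword w }

/-- The monomial `eᵢ ⊗ w` in `ℝ^{1×ℓ}⟨x,x*⟩`. -/
noncomputable def monoRow {g ℓ : ℕ} (i : Fin ℓ) (w : List (Lttr g)) : Fin ℓ → FreePoly g :=
  fun j => if j = i then fword w else 0

/-- `C` is a right chip space: it is spanned by a set of monomials and is closed
under taking middle chips. -/
def IsChipSpace {g ℓ : ℕ} (C : Submodule ℝ (Fin ℓ → FreePoly g)) : Prop :=
  (∃ S : Set (Fin ℓ × List (Lttr g)),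
      C = Submodule.span ℝ ((fun m => monoRow m.1 m.2) '' S)) ∧
  ∀ (i : Fin ℓ) (w1 w2 w3 : List (Lttr g)),
    monoRow i (w1 ++ w2 ++ w3) ∈ C → monoRow i w3 ∈ C → monoRow i (w2 ++ w3) ∈ C

/-- `C` is full: it contains every right chip of each of its monomials. -/
def IsFullChip {g ℓ : ℕ} (C : Submodule ℝ (Fin ℓ → FreePoly g)) : Prop :=
  ∀ (i : Fin ℓ) (w1 w2 : List (Lttr g)), monoRow i (w1 ++ w2) ∈ C → monoRow i w2 ∈ C

/-- The subspace `ℝ⟨x,x*⟩_d C`: the span of all products `q • c` with `deg q ≤ d`, `c ∈ C`. -/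
noncomputable def degC {g ℓ : ℕ} (d : ℕ) (C : Submodule ℝ (Fin ℓ → FreePoly g)) :
    Submodule ℝ (Fin ℓ → FreePoly g) :=
  Submodule.span ℝ { v | ∃ q ∈ degLE g d, ∃ c ∈ C, v = fun j => q * c j }

/-- The subspace `C*ℝ⟨x,x*⟩₁C` of `ℓ × ℓ` matrix polynomials. -/
noncomputable def sandC {g ℓ : ℕ} (C : Submodule ℝ (Fin ℓ → FreePoly g)) :
    Submodule ℝ (Matrix (Fin ℓ) (Fin ℓ) (FreePoly g)) :=
  Submodule.span ℝ
    { m | ∃ a ∈ C, ∃ b ∈ C, ∃ q ∈ degLE g 1,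
        m = fun u v => pstar (a u) * q * b v }

/-- `I` is an `(L,C)`-real left module. -/
def IsLCReal {g ν ℓ : ℕ} (L : Matrix (Fin ν) (Fin ν) (FreePoly g))
    (C : Submodule ℝ (Fin ℓ → FreePoly g))
    (I : Submodule (FreePoly g) (Fin ℓ → FreePoly g)) : Prop :=
  ∀ (a b : ℕ) (p : Fin a → (Fin ℓ → FreePoly g))
    (q : Fin b → Matrix (Fin ν) (Fin ℓ) (FreePoly g)),
    (∀ i, p i ∈ C) → (∀ j, rowsInR C (q j)) →
    ((∑ i, sqForm (p i)) + ∑ j, quadForm L (q j)) ∈ modPlusStar I →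
    (∀ i, p i ∈ I) ∧ ∀ j, rowsInM I (L * q j)

/-- `I` is a strongly `(L,C)`-real left module. -/
def IsLCRealStrong {g ν ℓ : ℕ} (L : Matrix (Fin ν) (Fin ν) (FreePoly g))
    (C : Submodule ℝ (Fin ℓ → FreePoly g))
    (I : Submodule (FreePoly g) (Fin ℓ → FreePoly g)) : Prop :=
  ∀ (a b : ℕ) (p : Fin a → (Fin ℓ → FreePoly g))
    (q : Fin b → Matrix (Fin ν) (Fin ℓ) (FreePoly g)),
    (∀ i, p i ∈ C) → (∀ j, rowsInR C (q j)) →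
    ((∑ i, sqForm (p i)) + ∑ j, quadForm L (q j)) ∈ modPlusStar I →
    (∀ i, p i ∈ I) ∧ ∀ j, rowsInM I (q j)

/-- The `(L,C)`-real radical of `I`. -/
noncomputable def LCrad {g ν ℓ : ℕ} (L : Matrix (Fin ν) (Fin ν) (FreePoly g))
    (C : Submodule ℝ (Fin ℓ → FreePoly g))
    (I : Submodule (FreePoly g) (Fin ℓ → FreePoly g)) :
    Submodule (FreePoly g) (Fin ℓ → FreePoly g) :=
  sInf { J | I ≤ J ∧ IsLCReal L C J }

/-- The strong `(L,C)`-real radical of `I`. -/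
noncomputable def LCradStrong {g ν ℓ : ℕ} (L : Matrix (Fin ν) (Fin ν) (FreePoly g))
    (C : Submodule ℝ (Fin ℓ → FreePoly g))
    (I : Submodule (FreePoly g) (Fin ℓ → FreePoly g)) :
    Submodule (FreePoly g) (Fin ℓ → FreePoly g) :=
  sInf { J | I ≤ J ∧ IsLCRealStrong L C J }

/-- The constant term of a noncommutative polynomial. -/
noncomputable def constTerm (g : ℕ) : FreePoly g →ₐ[ℝ] ℝ :=
  FreeAlgebra.lift ℝ (fun _ : Lttr g => (0 : ℝ))

/-- `L` is a linear pencil: symmetric, with entries of degree at most `1`. -/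
def IsPencil {g ν : ℕ} (L : Matrix (Fin ν) (Fin ν) (FreePoly g)) : Prop :=
  starM L = L ∧ ∀ i j, L i j ∈ degLE g 1

/-- `L` is monic: its constant term is the identity matrix. -/
def IsMonic {g ν : ℕ} (L : Matrix (Fin ν) (Fin ν) (FreePoly g)) : Prop :=
  ∀ i j, constTerm g (L i j) = if i = j then 1 else 0

/-- A real matrix viewed as a constant matrix polynomial. -/
noncomputable def constM {g a b : ℕ} (A : Matrix (Fin a) (Fin b) ℝ) :
    Matrix (Fin a) (Fin b) (FreePoly g) :=
  A.map (algebraMap ℝ (FreePoly g))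

/-- `(X, v) ∈ V(I)`: every element of `I` kills `v` at `X`. -/
def inV {g ℓ n : ℕ} (I : Submodule (FreePoly g) (Fin ℓ → FreePoly g))
    (X : Fin g → Matrix (Fin n) (Fin n) ℝ) (v : Fin ℓ × Fin n → ℝ) : Prop :=
  ∀ p ∈ I, (evalRow X p).mulVec v = 0

/-!
If `L(x) ⪰ 0` at a point `x ∈ ℝ^g`, the polynomials vanishing at `x` form an `L`-real left ideal
without `1`, so the radical is proper. Conversely let `J` be `L`-real, let `U` be the real vectors
`u` with `Lu ∈ J`, and let `T ⊆ ℝ^g` be the common zeros of the degree-one elements of `J`.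
If `T` is empty, a degree-one Nullstellensatz gives `r ∈ J` with `r + r* = 1`, and realness
gives `1 ∈ J`. Otherwise `L(x)` kills `U` for `x ∈ T`, and as no `L(x)` is positive
semidefinite, separating the matrices `L(x) + B` (`x ∈ T`, `B` in the span of the `uuᵀ`, `u ∈ U`)
from the positive definite cone gives vectors `wₖ ⊥ U`, not all zero, and `β ≤ 0` with
`Σₖ wₖᵀ L(x) wₖ = β` on `T`. The Nullstellensatz turns this into `-β + Σₖ wₖᵀ L wₖ = r + r*`
with `r ∈ J`, and realness gives `√(-β) ∈ J` and `wₖ ∈ U`; so `1 ∈ J` if `β < 0`, while `β = 0`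
would force every `wₖ` into `U ∩ U^⊥ = 0`.

Matrix sizes `n > 1` reduce to `n = 1`: since `L` has degree one, a diagonal block of `L(X)` is
`L` at the scalar point `((Xᵢ)ⱼⱼ)ᵢ`.
-/

section Separation

lemma le_of_forall_pos_add_mul_le {a b c : ℝ} (h : ∀ ε > 0, a + ε * b ≤ c) : a ≤ c := by
  have hcont : Continuous fun ε : ℝ => a + ε * b := by fun_prop
  have hlim : Filter.Tendsto (fun ε : ℝ => a + ε * b) (nhdsWithin 0 (Set.Ioi 0)) (nhds a) :=
    tendsto_nhdsWithin_of_tendsto_nhds (by simpa using hcont.tendsto 0)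
  exact le_of_tendsto hlim (eventually_nhdsWithin_of_forall h)

lemma eq_zero_of_forall_le_add_mul {a b u : ℝ} (h : ∀ t : ℝ, u ≤ a + t * b) : b = 0 := by
  by_contra hb
  have := h ((u - a - 1) / b)
  rw [div_mul_cancel₀ _ hb] at this
  linarith

variable {n : Type*}

def rankOneSpan (U : Submodule ℝ (n → ℝ)) : Submodule ℝ (Matrix n n ℝ) :=
  Submodule.span ℝ (Set.range fun u : U => Matrix.vecMulVec (u : n → ℝ) (u : n → ℝ))

lemma vecMulVec_mem_rankOneSpan {U : Submodule ℝ (n → ℝ)} {u : n → ℝ} (hu : u ∈ U) :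
    Matrix.vecMulVec u u ∈ rankOneSpan U :=
  Submodule.subset_span ⟨⟨u, hu⟩, rfl⟩

lemma isHermitian_of_mem_rankOneSpan {U : Submodule ℝ (n → ℝ)} {B : Matrix n n ℝ}
    (hB : B ∈ rankOneSpan U) : B.IsHermitian := by
  induction hB using Submodule.span_induction with
  | mem B hB =>
    obtain ⟨u, rfl⟩ := hB
    simp [Matrix.IsHermitian]
  | zero => exact Matrix.isHermitian_zero
  | add B B' _ _ hB hB' => exact hB.add hB'
  | smul c B _ hB => exact hB.smul (IsSelfAdjoint.all c)

variable [Fintype n]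

/-- Matrices with positive quadratic form, symmetric or not: unlike `PosDef`, an open set. -/
def posCone (n : Type*) [Fintype n] : Set (Matrix n n ℝ) :=
  {A | ∀ v ∈ Metric.sphere (0 : n → ℝ) 1, 0 < v ⬝ᵥ A *ᵥ v}

lemma isOpen_posCone : IsOpen (posCone n) := by
  have hcont : Continuous fun z : Matrix n n ℝ × (n → ℝ) => z.2 ⬝ᵥ z.1 *ᵥ z.2 :=
    continuous_snd.dotProduct (continuous_fst.matrix_mulVec continuous_snd)
  refine isOpen_iff_eventually.2 fun A hA =>
    (isCompact_sphere 0 1).eventually_forall_of_forall_eventually fun v hv => ?_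
  exact (hcont.tendsto (A, v)).eventually (lt_mem_nhds (hA v hv))

lemma smul_mem_posCone {A : Matrix n n ℝ} (hA : A ∈ posCone n) {t : ℝ} (ht : 0 < t) :
    t • A ∈ posCone n := fun v hv => by
  simpa [Matrix.smul_mulVec] using mul_pos ht (hA v hv)

lemma add_mem_posCone {A B : Matrix n n ℝ} (hA : A ∈ posCone n) (hB : ∀ v, 0 ≤ v ⬝ᵥ B *ᵥ v) :
    A + B ∈ posCone n := fun v hv => by
  simpa [Matrix.add_mulVec] using add_pos_of_pos_of_nonneg (hA v hv) (hB v)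

lemma one_mem_posCone [DecidableEq n] : (1 : Matrix n n ℝ) ∈ posCone n := fun v hv => by
  simpa using dotProduct_self_star_pos_iff.2 (ne_zero_of_mem_unit_sphere ⟨v, hv⟩)

lemma convex_posCone : Convex ℝ (posCone n) :=
  convex_iff_forall_pos.2 fun A hA B hB a b ha hb _ v hv => by
    simpa [Matrix.add_mulVec] using
      add_pos (smul_mem_posCone hA ha v hv) (smul_mem_posCone hB hb v hv)

lemma Matrix.IsHermitian.posDef_of_mem_posCone {A : Matrix n n ℝ} (hA : A.IsHermitian)
    (hpos : A ∈ posCone n) : A.PosDef := by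
  refine .of_dotProduct_mulVec_pos hA fun v hv => ?_
  have hc : 0 < ‖v‖⁻¹ := by positivity
  have h := hpos (‖v‖⁻¹ • v) (by simp [norm_smul, hv])
  simp only [Matrix.mulVec_smul, dotProduct_smul, smul_dotProduct, smul_eq_mul] at h
  simpa using (mul_pos_iff_of_pos_left hc).1 ((mul_pos_iff_of_pos_left hc).1 h)

lemma nonneg_of_forall_mem_posCone_lt [DecidableEq n] {f : Matrix n n ℝ →ₗ[ℝ] ℝ} {u : ℝ}
    (hf : ∀ A ∈ posCone n, f A < u) : 0 ≤ u :=
  le_of_forall_pos_add_mul_le fun ε hε => by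
    simpa using (hf _ (smul_mem_posCone one_mem_posCone hε)).le

lemma apply_vecMulVec_nonpos_of_forall_mem_posCone_lt [DecidableEq n]
    {f : Matrix n n ℝ →ₗ[ℝ] ℝ} {u : ℝ} (hf : ∀ A ∈ posCone n, f A < u) (z : n → ℝ) :
    f (Matrix.vecMulVec z z) ≤ 0 := by
  have hnonpos : ∀ A ∈ posCone n, f A ≤ 0 := fun A hA => by
    by_contra! h
    have := hf _ (smul_mem_posCone hA (t := (|u| + 1) / f A) (by positivity))
    rw [map_smul, smul_eq_mul, div_mul_cancel₀ _ h.ne'] at this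
    linarith [le_abs_self u]
  refine le_of_forall_pos_add_mul_le (b := f 1) fun ε hε => ?_
  have := hnonpos _ (add_mem_posCone (smul_mem_posCone one_mem_posCone hε)
    (B := Matrix.vecMulVec z z) fun v => by
      simpa [Matrix.vecMulVec_mulVec, dotProduct_comm z v] using mul_self_nonneg (v ⬝ᵥ z))
  simpa [add_comm] using this

lemma LinearMap.apply_eq_sum_mul_single [DecidableEq n] (f : Matrix n n ℝ →ₗ[ℝ] ℝ)
    (A : Matrix n n ℝ) : f A = ∑ i, ∑ j, A i j * f (Matrix.single i j 1) := by
  conv_lhs => rw [Matrix.matrix_eq_sum_single A]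
  simp only [map_sum]
  refine Finset.sum_congr rfl fun i _ => Finset.sum_congr rfl fun j _ => ?_
  rw [← smul_eq_mul, ← map_smul, Matrix.smul_single, smul_eq_mul, mul_one]

lemma exists_sum_dotProduct_mulVec_eq_neg [DecidableEq n] (f : Matrix n n ℝ →ₗ[ℝ] ℝ)
    (hf : ∀ z, f (Matrix.vecMulVec z z) ≤ 0) :
    ∃ (m : ℕ) (w : Fin m → n → ℝ),
      ∀ A : Matrix n n ℝ, A.IsHermitian → ∑ k, w k ⬝ᵥ A *ᵥ w k = -f A := by
  set C : Matrix n n ℝ := Matrix.of fun i j => f (Matrix.single i j 1)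
  set D : Matrix n n ℝ := -(1 / 2 : ℝ) • (C + Cᵀ)
  have hD : ∀ A : Matrix n n ℝ, A.IsHermitian → ∑ i, ∑ j, D i j * A i j = -f A := by
    intro A hA
    have hsymm : ∀ i j, A j i = A i j := fun i j => by simpa using hA.apply i j
    rw [f.apply_eq_sum_mul_single A]
    simp only [D, C, Matrix.smul_apply, Matrix.add_apply, Matrix.transpose_apply, Matrix.of_apply,
      smul_eq_mul, mul_add, add_mul, Finset.sum_add_distrib]
    conv_lhs => arg 2; rw [Finset.sum_comm]
    simp only [hsymm]
    rw [← Finset.sum_add_distrib, ← Finset.sum_neg_distrib]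
    refine Finset.sum_congr rfl fun i _ => ?_
    rw [← Finset.sum_add_distrib, ← Finset.sum_neg_distrib]
    exact Finset.sum_congr rfl fun j _ => by rw [hsymm j i]; ring
  have hDpsd : D.PosSemidef := by
    refine .of_dotProduct_mulVec_nonneg ?_ fun z => ?_
    · ext i j
      simp [D, add_comm]
    · have hz := hD (Matrix.vecMulVec z z) (by ext i j; simp [Matrix.vecMulVec_apply, mul_comm])
      have heq : star z ⬝ᵥ D *ᵥ z = ∑ i, ∑ j, D i j * Matrix.vecMulVec z z i j := by
        simp only [star_trivial, dotProduct, Matrix.mulVec, Finset.mul_sum, Matrix.vecMulVec_apply]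
        exact Finset.sum_congr rfl fun i _ => Finset.sum_congr rfl fun j _ => by ring
      linarith [hf z]
  obtain ⟨m, w, hw⟩ := Matrix.posSemidef_iff_eq_sum_vecMulVec.1 hDpsd
  refine ⟨m, w, fun A hA => ?_⟩
  rw [← hD A hA, hw]
  simp only [Matrix.sum_apply, Matrix.vecMulVec_apply, star_trivial, dotProduct, Matrix.mulVec,
    Finset.sum_mul, Finset.mul_sum]
  rw [Finset.sum_comm]
  refine Finset.sum_congr rfl fun i _ => ?_
  rw [Finset.sum_comm]
  exact Finset.sum_congr rfl fun j _ => Finset.sum_congr rfl fun k _ => by ring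

/-- Hahn–Banach separation of `W` from the positive definite cone. -/
theorem exists_sum_dotProduct_mulVec_eq_of_forall_not_posDef [DecidableEq n]
    {W : Set (Matrix n n ℝ)} (hne : W.Nonempty)
    (hline : ∀ A ∈ W, ∀ B ∈ W, ∀ t : ℝ, AffineMap.lineMap A B t ∈ W)
    (hherm : ∀ A ∈ W, A.IsHermitian) (hpos : ∀ A ∈ W, ¬A.PosDef) :
    ∃ (m : ℕ) (w : Fin m → n → ℝ), w ≠ 0 ∧ ∃ β ≤ 0, ∀ A ∈ W, ∑ k, w k ⬝ᵥ A *ᵥ w k = β := by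
  have hWconv : Convex ℝ W := convex_iff_segment_subset.2 fun A hA B hB => by
    rw [segment_eq_image_lineMap]
    rintro _ ⟨t, -, rfl⟩
    exact hline A hA B hB t
  have hdisj : Disjoint (posCone n) W := Set.disjoint_left.2 fun A hAO hAW =>
    hpos A hAW ((hherm A hAW).posDef_of_mem_posCone hAO)
  obtain ⟨f, u, hfO, hfW⟩ := geometric_hahn_banach_open convex_posCone isOpen_posCone hWconv hdisj
  obtain ⟨A₀, hA₀⟩ := hne
  have hconst : ∀ A ∈ W, f A = f A₀ := fun A hA => by
    have := eq_zero_of_forall_le_add_mul (a := f A₀) (b := f A - f A₀) fun t =>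
      (hfW _ (hline A₀ hA₀ A hA t)).trans_eq (by simp [AffineMap.lineMap_apply_module]; ring)
    linarith
  have hu : 0 ≤ u := nonneg_of_forall_mem_posCone_lt (f := f.toLinearMap) hfO
  obtain ⟨m, w, hw⟩ := exists_sum_dotProduct_mulVec_eq_neg f.toLinearMap
    (apply_vecMulVec_nonpos_of_forall_mem_posCone_lt (f := f.toLinearMap) hfO)
  refine ⟨m, w, ?_, -f A₀, by linarith [hfW A₀ hA₀], fun A hA => ?_⟩
  · rintro rfl
    have h1 := hw 1 Matrix.isHermitian_one
    have h0 := hw A₀ (hherm A₀ hA₀)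
    simp at h1 h0
    linarith [hfO 1 one_mem_posCone, hfW A₀ hA₀]
  · rw [hw A (hherm A hA), ContinuousLinearMap.coe_coe, hconst A hA]

lemma exists_mem_forall_dotProduct_sub_eq_zero (U : Submodule ℝ (n → ℝ)) (v : n → ℝ) :
    ∃ u ∈ U, ∀ u' ∈ U, u' ⬝ᵥ (v - u) = 0 := by
  set K : Submodule ℝ (EuclideanSpace ℝ n) := U.comap (WithLp.linearEquiv 2 ℝ (n → ℝ)).toLinearMap
  refine ⟨(K.starProjection (WithLp.toLp 2 v)).ofLp, K.starProjection_apply_mem _, fun u' hu' => ?_⟩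
  have h := Submodule.inner_right_of_mem_orthogonal (u := WithLp.toLp 2 u') hu'
    (K.sub_starProjection_mem_orthogonal (WithLp.toLp 2 v))
  simpa [EuclideanSpace.inner_eq_star_dotProduct, dotProduct_comm] using h

lemma posSemidef_of_posDef_add {U : Submodule ℝ (n → ℝ)} {M B : Matrix n n ℝ}
    (hM : M.IsHermitian) (hMU : ∀ u ∈ U, M *ᵥ u = 0)
    (hBU : ∀ w, (∀ u ∈ U, u ⬝ᵥ w = 0) → B *ᵥ w = 0) (hMB : (M + B).PosDef) : M.PosSemidef := by
  refine .of_dotProduct_mulVec_nonneg hM fun v => ?_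
  obtain ⟨u, hu, hperp⟩ := exists_mem_forall_dotProduct_sub_eq_zero U v
  have hMw : M *ᵥ v = M *ᵥ (v - u) := by rw [Matrix.mulVec_sub, hMU u hu, sub_zero]
  have huMw : u ⬝ᵥ M *ᵥ (v - u) = 0 := by
    have hMT : Mᵀ = M := by rw [← Matrix.conjTranspose_eq_transpose_of_trivial]; exact hM
    rw [Matrix.dotProduct_mulVec, ← Matrix.mulVec_transpose, hMT, hMU u hu, zero_dotProduct]
  have := hMB.posSemidef.dotProduct_mulVec_nonneg (v - u)
  rw [star_trivial, Matrix.add_mulVec, hBU _ hperp, add_zero] at this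
  calc 0 ≤ (v - u) ⬝ᵥ M *ᵥ (v - u) := this
    _ = star v ⬝ᵥ M *ᵥ v := by rw [star_trivial, hMw, sub_dotProduct, huMw, sub_zero]

lemma mulVec_eq_zero_of_mem_rankOneSpan {U : Submodule ℝ (n → ℝ)} {B : Matrix n n ℝ}
    (hB : B ∈ rankOneSpan U) {v : n → ℝ} (hv : ∀ u ∈ U, u ⬝ᵥ v = 0) : B *ᵥ v = 0 := by
  induction hB using Submodule.span_induction with
  | mem B hB =>
    obtain ⟨u, rfl⟩ := hB
    simp [Matrix.vecMulVec_mulVec, hv u u.2]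
  | zero => exact Matrix.zero_mulVec v
  | add B B' _ _ hB hB' => rw [Matrix.add_mulVec, hB, hB', add_zero]
  | smul c B _ hB => rw [Matrix.smul_mulVec, hB, smul_zero]

/-- One step of facial reduction. -/
theorem exists_orthogonal_sum_dotProduct_mulVec_eq [DecidableEq n] {E : Type*}
    [AddCommGroup E] [Module ℝ E] (F : E → Matrix n n ℝ)
    (hF : ∀ x y : E, ∀ t : ℝ, F (AffineMap.lineMap x y t) = AffineMap.lineMap (F x) (F y) t)
    {T : Set E} (hT : T.Nonempty) (hTline : ∀ x ∈ T, ∀ y ∈ T, ∀ t : ℝ, AffineMap.lineMap x y t ∈ T)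
    (hherm : ∀ x ∈ T, (F x).IsHermitian) (U : Submodule ℝ (n → ℝ))
    (hker : ∀ x ∈ T, ∀ u ∈ U, F x *ᵥ u = 0) (hpsd : ∀ x ∈ T, ¬(F x).PosSemidef) :
    ∃ (m : ℕ) (w : Fin m → n → ℝ), w ≠ 0 ∧ (∀ k, ∀ u ∈ U, u ⬝ᵥ w k = 0) ∧
      ∃ β ≤ 0, ∀ x ∈ T, ∑ k, w k ⬝ᵥ F x *ᵥ w k = β := by
  set B := rankOneSpan U
  -- the directions `uuᵀ` force the separating functional to vanish on `U`
  set W := {A | ∃ x ∈ T, ∃ b ∈ B, A = F x + b}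
  have hline : ∀ A ∈ W, ∀ A' ∈ W, ∀ t : ℝ, AffineMap.lineMap A A' t ∈ W := by
    rintro _ ⟨x, hx, b, hb, rfl⟩ _ ⟨y, hy, b', hb', rfl⟩ t
    refine ⟨_, hTline x hx y hy t, AffineMap.lineMap b b' t, ?_, ?_⟩
    · rw [AffineMap.lineMap_apply_module]
      exact B.add_mem (B.smul_mem _ hb) (B.smul_mem _ hb')
    · rw [hF]
      simp only [AffineMap.lineMap_apply_module]
      module
  have hherm' : ∀ A ∈ W, A.IsHermitian := by
    rintro _ ⟨x, hx, b, hb, rfl⟩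
    exact (hherm x hx).add (isHermitian_of_mem_rankOneSpan hb)
  have hpos : ∀ A ∈ W, ¬A.PosDef := by
    rintro _ ⟨x, hx, b, hb, rfl⟩ hA
    exact hpsd x hx (posSemidef_of_posDef_add (hherm x hx) (hker x hx)
      (fun v hv => mulVec_eq_zero_of_mem_rankOneSpan hb hv) hA)
  obtain ⟨x₀, hx₀⟩ := hT
  have hW : ∀ x ∈ T, F x ∈ W := fun x hx => ⟨x, hx, 0, B.zero_mem, (add_zero _).symm⟩
  obtain ⟨m, w, hw0, β, hβ, hw⟩ :=
    exists_sum_dotProduct_mulVec_eq_of_forall_not_posDef ⟨_, hW x₀ hx₀⟩ hline hherm' hpos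
  refine ⟨m, w, hw0, fun k u hu => ?_, β, hβ, fun x hx => hw _ (hW x hx)⟩
  have h := hw _ ⟨x₀, hx₀, _, vecMulVec_mem_rankOneSpan hu, rfl⟩
  simp only [Matrix.add_mulVec, dotProduct_add, Finset.sum_add_distrib, hw _ (hW x₀ hx₀),
    add_eq_left, Matrix.vecMulVec_mulVec, op_smul_eq_smul, dotProduct_smul, smul_eq_mul,
    dotProduct_comm (w _) u] at h
  exact mul_self_eq_zero.1 ((Finset.sum_eq_zero_iff_of_nonneg fun k _ => mul_self_nonneg _).1
    h k (Finset.mem_univ k))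

end Separation
section

variable {g : ℕ}

noncomputable def scalarEval (x : Fin g → ℝ) : FreePoly g →ₐ[ℝ] ℝ :=
  FreeAlgebra.lift ℝ (Sum.elim x x)

@[simp]
lemma scalarEval_ι (x : Fin g → ℝ) (l : Lttr g) :
    scalarEval x (FreeAlgebra.ι ℝ l) = Sum.elim x x l := by
  simp [scalarEval]

noncomputable def pstarLin (g : ℕ) : FreePoly g →ₗ[ℝ] FreePoly g where
  toFun := pstar
  map_add' p q := by simp [pstar]
  map_smul' c p := by simp [pstar]

@[simp]
lemma pstar_algebraMap (c : ℝ) :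
    pstar (algebraMap ℝ (FreePoly g) c) = algebraMap ℝ (FreePoly g) c := by
  simp [pstar]

@[simp]
lemma pstar_one : pstar (1 : FreePoly g) = 1 := by
  simpa using pstar_algebraMap (g := g) 1

@[simp]
lemma pstar_ι (l : Lttr g) : pstar (FreeAlgebra.ι ℝ l) = FreeAlgebra.ι ℝ l.swap := by
  simp [pstar]

@[simp]
lemma pstar_mul (p q : FreePoly g) : pstar (p * q) = pstar q * pstar p := by
  simp [pstar]

@[simp]
lemma pstar_add (p q : FreePoly g) : pstar (p + q) = pstar p + pstar q :=
  map_add (pstarLin g) p q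

@[simp]
lemma pstar_sub (p q : FreePoly g) : pstar (p - q) = pstar p - pstar q :=
  map_sub (pstarLin g) p q

@[simp]
lemma pstar_smul (c : ℝ) (p : FreePoly g) : pstar (c • p) = c • pstar p :=
  map_smul (pstarLin g) c p

@[simp]
lemma pstar_sum {ι : Type*} (s : Finset ι) (f : ι → FreePoly g) :
    pstar (∑ i ∈ s, f i) = ∑ i ∈ s, pstar (f i) :=
  map_sum (pstarLin g) f s

lemma scalarEval_pstar (x : Fin g → ℝ) (p : FreePoly g) :
    scalarEval x (pstar p) = scalarEval x p := by
  induction p using FreeAlgebra.induction with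
  | grade0 c => simp
  | grade1 l => cases l <;> simp
  | mul p q hp hq => simp [hp, hq, mul_comm]
  | add p q hp hq => simp [hp, hq]

lemma degLE_one_eq_span :
    degLE g 1 = Submodule.span ℝ (insert 1 (Set.range (FreeAlgebra.ι ℝ))) := by
  refine le_antisymm (Submodule.span_le.2 ?_) (Submodule.span_le.2 ?_)
  · rintro _ ⟨w, hw, rfl⟩
    match w, hw with
    | [], _ => exact Submodule.subset_span (Set.mem_insert _ _)
    | [l], _ => exact Submodule.subset_span (Set.mem_insert_of_mem _ ⟨l, by simp [fword]⟩)
  · rintro _ (rfl | ⟨l, rfl⟩)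
    · exact Submodule.subset_span ⟨[], by simp, by simp [fword]⟩
    · exact Submodule.subset_span ⟨[l], by simp, by simp [fword]⟩

@[elab_as_elim]
lemma degLE_one_induction {P : FreePoly g → Prop} (one : P 1)
    (ι : ∀ l, P (FreeAlgebra.ι ℝ l)) (add : ∀ p q, P p → P q → P (p + q))
    (smul : ∀ (c : ℝ) p, P p → P (c • p)) {p : FreePoly g} (hp : p ∈ degLE g 1) : P p := by
  rw [degLE_one_eq_span] at hp
  induction hp using Submodule.span_induction with
  | mem p hp =>
    rcases hp with rfl | ⟨l, rfl⟩
    exacts [one, ι l]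
  | zero => simpa using smul 0 1 one
  | add p q _ _ hp hq => exact add p q hp hq
  | smul c p _ hp => exact smul c p hp

lemma one_mem_degLE_one : (1 : FreePoly g) ∈ degLE g 1 := by
  rw [degLE_one_eq_span]; exact Submodule.subset_span (Set.mem_insert _ _)

lemma algebraMap_mem_degLE_one (c : ℝ) : algebraMap ℝ (FreePoly g) c ∈ degLE g 1 := by
  simpa [Algebra.algebraMap_eq_smul_one] using (degLE g 1).smul_mem c one_mem_degLE_one

lemma evalP_apply_self_of_mem_degLE_one {n : ℕ} (X : Fin g → Matrix (Fin n) (Fin n) ℝ)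
    (z : Fin n) {p : FreePoly g} (hp : p ∈ degLE g 1) :
    evalP X p z z = scalarEval (fun i => X i z z) p := by
  refine degLE_one_induction ?_ (fun l => ?_) (fun p q hp hq => ?_) (fun c p hp => ?_) hp
  · simp
  · cases l <;> simp [evalP]
  · simp [hp, hq]
  · simp [hp]

lemma add_pstar_eq {p : FreePoly g} (hp : p ∈ degLE g 1) :
    p + pstar p = algebraMap ℝ (FreePoly g) (2 * scalarEval 0 p) +
      ∑ i, (scalarEval (Pi.single i 1) p - scalarEval 0 p) • (xvar i + xstar i) := by
  refine degLE_one_induction ?_ (fun l => ?_) (fun p q hp hq => ?_) (fun c p hp => ?_) hp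
  · simp [one_add_one_eq_two, map_ofNat]
  · cases l <;> simp [xvar, xstar, Pi.single_apply, Finset.sum_add_distrib, add_comm]
  · rw [pstar_add, add_add_add_comm, hp, hq]
    simp only [map_add, mul_add, add_sub_add_comm, add_smul, Finset.sum_add_distrib]
    abel
  · rw [pstar_smul, ← smul_add, hp]
    simp only [map_smul, smul_eq_mul, smul_add, Finset.smul_sum, smul_smul, ← mul_sub,
      Algebra.algebraMap_eq_smul_one, mul_left_comm c]

lemma add_pstar_eq_of_scalarEval_eq {p q : FreePoly g} (hp : p ∈ degLE g 1) (hq : q ∈ degLE g 1)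
    (h : ∀ x, scalarEval x p = scalarEval x q) : p + pstar p = q + pstar q := by
  simp only [add_pstar_eq hp, add_pstar_eq hq, h]

/-- For `p` of degree at most one, `homogenize p (x, t) = t * p (x / t)`; it is read off the values
of `p` at `0` and at the unit vectors. -/
noncomputable def homogenize (g : ℕ) : FreePoly g →ₗ[ℝ] Module.Dual ℝ ((Fin g → ℝ) × ℝ) :=
  (scalarEval 0).toLinearMap.smulRight (LinearMap.snd ℝ _ ℝ) +
    ∑ i, ((scalarEval (Pi.single i 1)).toLinearMap - (scalarEval 0).toLinearMap).smulRight
      ((LinearMap.proj i).comp (LinearMap.fst ℝ _ ℝ))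

lemma homogenize_apply (p : FreePoly g) (v : Fin g → ℝ) (t : ℝ) :
    homogenize g p (v, t) =
      scalarEval 0 p * t + ∑ i, (scalarEval (Pi.single i 1) p - scalarEval 0 p) * v i := by
  simp [homogenize]

lemma homogenize_apply_one {p : FreePoly g} (hp : p ∈ degLE g 1) (x : Fin g → ℝ) :
    homogenize g p (x, 1) = scalarEval x p := by
  refine degLE_one_induction ?_ (fun l => ?_) (fun p q hp hq => ?_) (fun c p hp => ?_) hp
  · simp [homogenize_apply]
  · cases l <;> simp [homogenize_apply, Pi.single_apply]
  · simp [hp, hq]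
  · simp [hp]

lemma homogenize_apply_of_ne_zero {p : FreePoly g} (hp : p ∈ degLE g 1) (v : Fin g → ℝ)
    {t : ℝ} (ht : t ≠ 0) : homogenize g p (v, t) = t * scalarEval (t⁻¹ • v) p := by
  rw [← homogenize_apply_one hp, ← smul_eq_mul, ← map_smul, Prod.smul_mk, smul_inv_smul₀ ht,
    smul_eq_mul, mul_one]

lemma scalarEval_add_eq_add_homogenize {p : FreePoly g} (hp : p ∈ degLE g 1)
    (x v : Fin g → ℝ) :
    scalarEval (x + v) p = scalarEval x p + homogenize g p (v, 0) := by
  rw [← homogenize_apply_one hp, ← homogenize_apply_one hp, ← map_add, Prod.mk_add_mk, add_zero]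

lemma scalarEval_lineMap {p : FreePoly g} (hp : p ∈ degLE g 1) (x y : Fin g → ℝ) (t : ℝ) :
    scalarEval (AffineMap.lineMap x y t) p =
      AffineMap.lineMap (scalarEval x p) (scalarEval y p) t := by
  simp only [← homogenize_apply_one hp, AffineMap.lineMap_apply_module]
  rw [← map_smul, ← map_smul, ← map_add]
  simp

/-- Degree-one Nullstellensatz, proved by duality after homogenizing; `hinf` is the condition at
infinity. -/
lemma exists_mem_scalarEval_eq {H : Submodule ℝ (FreePoly g)} (hH : H ≤ degLE g 1)
    {s : FreePoly g} (hs : s ∈ degLE g 1)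
    (hzero : ∀ x, (∀ p ∈ H, scalarEval x p = 0) → scalarEval x s = 0)
    (hinf : ∀ v, (∀ p ∈ H, homogenize g p (v, 0) = 0) → homogenize g s (v, 0) = 0) :
    ∃ r ∈ H, ∀ x, scalarEval x r = scalarEval x s := by
  have hmem : homogenize g s ∈ H.map (homogenize g) := by
    rw [← Subspace.dualCoannihilator_dualAnnihilator_eq (W := H.map (homogenize g)),
      Submodule.mem_dualAnnihilator]
    rintro ⟨v, t⟩ hvt
    simp only [Submodule.mem_dualCoannihilator, Submodule.mem_map, forall_exists_index, and_imp,
      forall_apply_eq_imp_iff₂] at hvt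
    rcases eq_or_ne t 0 with rfl | ht
    · exact hinf v hvt
    · rw [homogenize_apply_of_ne_zero hs v ht, hzero _ fun p hp => ?_, mul_zero]
      simpa [homogenize_apply_of_ne_zero (hH hp) v ht, ht] using hvt p hp
  obtain ⟨r, hr, hrs⟩ := hmem
  exact ⟨r, hr, fun x => by rw [← homogenize_apply_one (hH hr), ← homogenize_apply_one hs, hrs]⟩

lemma exists_mem_scalarEval_eq_one {H : Submodule ℝ (FreePoly g)} (hH : H ≤ degLE g 1)
    (hT : ¬∃ x, ∀ p ∈ H, scalarEval x p = 0) : ∃ r ∈ H, ∀ x, scalarEval x r = 1 := by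
  simpa using exists_mem_scalarEval_eq hH one_mem_degLE_one (fun x hx => (hT ⟨x, hx⟩).elim)
    (fun v _ => by simp [homogenize_apply])

lemma exists_mem_scalarEval_eq_of_common_zero {H : Submodule ℝ (FreePoly g)} (hH : H ≤ degLE g 1)
    {x₀ : Fin g → ℝ} (hx₀ : ∀ p ∈ H, scalarEval x₀ p = 0) {s : FreePoly g} (hs : s ∈ degLE g 1)
    (hzero : ∀ x, (∀ p ∈ H, scalarEval x p = 0) → scalarEval x s = 0) :
    ∃ r ∈ H, ∀ x, scalarEval x r = scalarEval x s := by
  refine exists_mem_scalarEval_eq hH hs hzero fun v hv => ?_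
  have h := hzero (x₀ + v) fun p hp => by
    rw [scalarEval_add_eq_add_homogenize (hH hp), hx₀ p hp, hv p hp, add_zero]
  rwa [scalarEval_add_eq_add_homogenize hs, hzero x₀ hx₀, zero_add] at h

section Pencil

variable {ν : ℕ} {L : Matrix (Fin ν) (Fin ν) (FreePoly g)}

lemma IsPencil.pstar_apply (hL : IsPencil L) (i j : Fin ν) : pstar (L i j) = L j i :=
  congrFun (congrFun hL.1 j) i

lemma IsPencil.isHermitian_map (hL : IsPencil L) (x : Fin g → ℝ) :
    (L.map (scalarEval x)).IsHermitian := by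
  ext i j
  rw [Matrix.conjTranspose_apply, Matrix.map_apply, Matrix.map_apply, star_trivial,
    ← hL.pstar_apply, scalarEval_pstar]

lemma IsPencil.map_scalarEval_lineMap (hL : IsPencil L) (x y : Fin g → ℝ) (t : ℝ) :
    L.map (scalarEval (AffineMap.lineMap x y t)) =
      AffineMap.lineMap (L.map (scalarEval x)) (L.map (scalarEval y)) t := by
  ext i j
  rw [Matrix.map_apply, scalarEval_lineMap (hL.2 i j)]
  simp [AffineMap.lineMap_apply_module]

lemma IsPencil.posSemidef_map_of_evalM (hL : IsPencil L) {n : ℕ}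
    {X : Fin g → Matrix (Fin n) (Fin n) ℝ} (hX : (evalM X L).PosSemidef) (z : Fin n) :
    (L.map (scalarEval fun i => X i z z)).PosSemidef := by
  have : L.map (scalarEval fun i => X i z z) = (evalM X L).submatrix (·, z) (·, z) := by
    ext i j
    exact (evalP_apply_self_of_mem_degLE_one X z (hL.2 i j)).symm
  exact this ▸ hX.submatrix _

lemma IsPencil.posSemidef_evalM_scalar_iff (hL : IsPencil L) (x : Fin g → ℝ) :
    (evalM (fun i => Matrix.of fun _ _ : Fin 1 => x i) L).PosSemidef ↔
      (L.map (scalarEval x)).PosSemidef := by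
  have : evalM (fun i => Matrix.of fun _ _ : Fin 1 => x i) L =
      (L.map (scalarEval x)).submatrix (Equiv.prodUnique (Fin ν) (Fin 1))
        (Equiv.prodUnique (Fin ν) (Fin 1)) := by
    ext ⟨i, a⟩ ⟨j, b⟩
    obtain rfl := Subsingleton.elim a 0
    obtain rfl := Subsingleton.elim b 0
    exact evalP_apply_self_of_mem_degLE_one _ 0 (hL.2 i j)
  rw [this, posSemidef_submatrix_equiv]

lemma IsPencil.not_exists_posSemidef_evalM_scalar_iff (hL : IsPencil L) :
    (¬∃ x : Fin g → ℝ, (evalM (fun i => Matrix.of fun _ _ : Fin 1 => x i) L).PosSemidef) ↔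
      ∀ n : ℕ, 0 < n → ¬∃ X : Fin g → Matrix (Fin n) (Fin n) ℝ, (evalM X L).PosSemidef :=
  ⟨fun h _ hn ⟨_, hX⟩ => h ⟨_, (hL.posSemidef_evalM_scalar_iff _).2
    (hL.posSemidef_map_of_evalM hX ⟨0, hn⟩)⟩, fun h ⟨_, hx⟩ => h 1 one_pos ⟨_, hx⟩⟩

end Pencil

section EvalKer

variable {ν : ℕ}

noncomputable def evalKer (x : Fin g → ℝ) : Submodule (FreePoly g) (Fin 1 → FreePoly g) :=
  Submodule.comap (LinearMap.proj 0) (RingHom.ker (scalarEval x))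

lemma mem_evalKer {x : Fin g → ℝ} {p : Fin 1 → FreePoly g} :
    p ∈ evalKer x ↔ scalarEval x (p 0) = 0 := by
  simp [evalKer]

lemma scalarEval_mul_apply (x : Fin g → ℝ) {a b : ℕ} (L : Matrix (Fin ν) (Fin a) (FreePoly g))
    (q : Matrix (Fin a) (Fin b) (FreePoly g)) (i : Fin ν) (k : Fin b) :
    scalarEval x ((L * q) i k) = (L.map (scalarEval x) *ᵥ fun j => scalarEval x (q j k)) i := by
  simp [Matrix.mul_apply, Matrix.mulVec, dotProduct]

lemma scalarEval_quadForm_apply (x : Fin g → ℝ) (L : Matrix (Fin ν) (Fin ν) (FreePoly g))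
    {b : ℕ} (q : Matrix (Fin ν) (Fin b) (FreePoly g)) (k : Fin b) :
    scalarEval x (quadForm L q k k) =
      (fun j => scalarEval x (q j k)) ⬝ᵥ L.map (scalarEval x) *ᵥ fun j => scalarEval x (q j k) := by
  simp only [quadForm, Matrix.mul_apply, starM, map_sum, map_mul, scalarEval_pstar,
    Matrix.mulVec, dotProduct, Matrix.map_apply, Finset.mul_sum, Finset.sum_mul]
  rw [Finset.sum_comm]
  exact Finset.sum_congr rfl fun _ _ => Finset.sum_congr rfl fun _ _ => by ring

lemma isLReal_evalKer {L : Matrix (Fin ν) (Fin ν) (FreePoly g)} {x : Fin g → ℝ}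
    (hx : (L.map (scalarEval x)).PosSemidef) : IsLReal L (evalKer x) := by
  rintro a b p q ⟨u, v, hu, hv, huv⟩
  set w : Fin b → Fin ν → ℝ := fun k j => scalarEval x (q k j 0)
  have hsq : ∀ i, 0 ≤ scalarEval x (p i 0) ^ 2 := fun i => sq_nonneg _
  have hquad : ∀ k, 0 ≤ w k ⬝ᵥ L.map (scalarEval x) *ᵥ w k := fun k => by
    simpa using hx.dotProduct_mulVec_nonneg (w k)
  have hsum : ∑ i, scalarEval x (p i 0) ^ 2 + ∑ k, w k ⬝ᵥ L.map (scalarEval x) *ᵥ w k = 0 := by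
    have h := congrArg (fun M => scalarEval x (M 0 0)) huv
    simp only [Matrix.add_apply, Matrix.sum_apply, map_add, map_sum, starM, scalarEval_pstar,
      scalarEval_quadForm_apply, sqForm, map_mul] at h
    rw [mem_evalKer.1 (hu 0), mem_evalKer.1 (hv 0), add_zero] at h
    simpa [sq] using h
  rw [add_eq_zero_iff_of_nonneg (Finset.sum_nonneg fun i _ => hsq i)
    (Finset.sum_nonneg fun k _ => hquad k), Finset.sum_eq_zero_iff_of_nonneg (fun i _ => hsq i),
    Finset.sum_eq_zero_iff_of_nonneg (fun k _ => hquad k)] at hsum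
  refine ⟨fun i => mem_evalKer.2 (pow_eq_zero_iff two_ne_zero |>.1 (hsum.1 i (Finset.mem_univ _))),
    fun k i => mem_evalKer.2 ?_⟩
  have hker : L.map (scalarEval x) *ᵥ w k = 0 :=
    (hx.dotProduct_mulVec_zero_iff (w k)).1 (by simpa using hsum.2 k (Finset.mem_univ _))
  rw [scalarEval_mul_apply]
  exact congrFun hker i

end EvalKer

section RealRadical

variable {ν : ℕ} {L : Matrix (Fin ν) (Fin ν) (FreePoly g)}
  {J : Submodule (FreePoly g) (Fin 1 → FreePoly g)}

def rowIdeal (J : Submodule (FreePoly g) (Fin 1 → FreePoly g)) : Submodule ℝ (FreePoly g) :=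
  (J.restrictScalars ℝ).comap (LinearMap.pi fun _ : Fin 1 => LinearMap.id)

lemma mem_rowIdeal {p : FreePoly g} : p ∈ rowIdeal J ↔ (fun _ => p) ∈ J := Iff.rfl

def degOneZeros (J : Submodule (FreePoly g) (Fin 1 → FreePoly g)) : Set (Fin g → ℝ) :=
  {x | ∀ p ∈ degLE g 1 ⊓ rowIdeal J, scalarEval x p = 0}

noncomputable def pencilMulVec (L : Matrix (Fin ν) (Fin ν) (FreePoly g)) :
    (Fin ν → ℝ) →ₗ[ℝ] (Fin ν → FreePoly g) :=
  LinearMap.pi fun i => ∑ j, (LinearMap.proj j).smulRight (L i j)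

lemma pencilMulVec_apply (w : Fin ν → ℝ) (i : Fin ν) :
    pencilMulVec L w i = ∑ j, w j • L i j := by
  simp [pencilMulVec]

noncomputable def pencilForm (L : Matrix (Fin ν) (Fin ν) (FreePoly g)) (w : Fin ν → ℝ) :
    FreePoly g :=
  ∑ i, w i • pencilMulVec L w i

noncomputable def kernelVectors (L : Matrix (Fin ν) (Fin ν) (FreePoly g))
    (J : Submodule (FreePoly g) (Fin 1 → FreePoly g)) : Submodule ℝ (Fin ν → ℝ) :=
  (Submodule.pi Set.univ fun _ => rowIdeal J).comap (pencilMulVec L)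

lemma mem_kernelVectors {w : Fin ν → ℝ} :
    w ∈ kernelVectors L J ↔ ∀ i, pencilMulVec L w i ∈ rowIdeal J := by
  simp [kernelVectors]

lemma scalarEval_pencilMulVec (x : Fin g → ℝ) (w : Fin ν → ℝ) (i : Fin ν) :
    scalarEval x (pencilMulVec L w i) = (L.map (scalarEval x) *ᵥ w) i := by
  simp [pencilMulVec_apply, Matrix.mulVec, dotProduct, mul_comm]

lemma scalarEval_pencilForm (x : Fin g → ℝ) (w : Fin ν → ℝ) :
    scalarEval x (pencilForm L w) = w ⬝ᵥ L.map (scalarEval x) *ᵥ w := by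
  simp [pencilForm, scalarEval_pencilMulVec, dotProduct]

lemma IsPencil.pencilMulVec_mem (hL : IsPencil L) (w : Fin ν → ℝ) (i : Fin ν) :
    pencilMulVec L w i ∈ degLE g 1 := by
  rw [pencilMulVec_apply]
  exact Submodule.sum_mem _ fun j _ => Submodule.smul_mem _ _ (hL.2 i j)

lemma IsPencil.pencilForm_mem (hL : IsPencil L) (w : Fin ν → ℝ) : pencilForm L w ∈ degLE g 1 :=
  Submodule.sum_mem _ fun i _ => Submodule.smul_mem _ _ (hL.pencilMulVec_mem w i)

lemma IsPencil.pstar_pencilForm (hL : IsPencil L) (w : Fin ν → ℝ) :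
    pstar (pencilForm L w) = pencilForm L w := by
  simp only [pencilForm, pencilMulVec_apply, pstar_sum, pstar_smul, hL.pstar_apply,
    Finset.smul_sum, smul_smul]
  rw [Finset.sum_comm]
  exact Finset.sum_congr rfl fun i _ => Finset.sum_congr rfl fun j _ => by rw [mul_comm]

lemma algebraMap_mul_mul_algebraMap (a b : ℝ) (p : FreePoly g) :
    algebraMap ℝ (FreePoly g) a * p * algebraMap ℝ (FreePoly g) b = (a * b) • p := by
  rw [mul_assoc, ← Algebra.commutes, ← mul_assoc, ← map_mul, ← Algebra.smul_def]

lemma mul_constM_replicateCol_apply (w : Fin ν → ℝ) (i : Fin ν) :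
    (L * (constM (Matrix.replicateCol (Fin 1) w) : Matrix (Fin ν) (Fin 1) (FreePoly g))) i =
      fun _ => pencilMulVec L w i := by
  ext a
  simp [Matrix.mul_apply, constM, pencilMulVec_apply, Algebra.smul_def, Algebra.commutes]

lemma quadForm_constM_replicateCol (w : Fin ν → ℝ) :
    quadForm L (constM (Matrix.replicateCol (Fin 1) w)) = Matrix.of fun _ _ => pencilForm L w := by
  ext a b
  simp only [quadForm, starM, Matrix.mul_apply, constM, Matrix.map_apply,
    Matrix.replicateCol_apply, pstar_algebraMap, Finset.sum_mul, algebraMap_mul_mul_algebraMap,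
    Matrix.of_apply, pencilForm, pencilMulVec_apply, Finset.smul_sum, smul_smul]
  rw [Finset.sum_comm]

lemma IsLReal.mem_of_add_pstar_eq (hJ : IsLReal L J) {r : FreePoly g} (hr : r ∈ rowIdeal J)
    (c : ℝ) {m : ℕ} (w : Fin m → Fin ν → ℝ)
    (h : algebraMap ℝ (FreePoly g) (c ^ 2) + ∑ k, pencilForm L (w k) = r + pstar r) :
    algebraMap ℝ (FreePoly g) c ∈ rowIdeal J ∧ ∀ k, w k ∈ kernelVectors L J := by
  have hmem : ((∑ _ : Fin 1, sqForm fun _ => algebraMap ℝ (FreePoly g) c) +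
      ∑ k, quadForm L (constM (Matrix.replicateCol (Fin 1) (w k)))) ∈ modPlusStar J := by
    refine ⟨fun _ _ => r, fun _ _ => r, fun _ => hr, fun _ => hr, ?_⟩
    ext a b
    simp only [Matrix.add_apply, Matrix.sum_apply, sqForm, quadForm_constM_replicateCol,
      Matrix.of_apply, pstar_algebraMap, ← sq, ← map_pow, Finset.univ_unique, Finset.sum_singleton]
    exact h
  obtain ⟨hc, hw⟩ := hJ 1 m _ _ hmem
  exact ⟨hc 0, fun k => mem_kernelVectors.2 fun i => by
    rw [mem_rowIdeal, ← mul_constM_replicateCol_apply]; exact hw k i⟩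

lemma one_mem_rowIdeal_of_algebraMap_mem {c : ℝ} (hc : c ≠ 0)
    (h : algebraMap ℝ (FreePoly g) c ∈ rowIdeal J) : (1 : FreePoly g) ∈ rowIdeal J := by
  simpa [Algebra.smul_def, ← map_mul, hc] using (rowIdeal J).smul_mem c⁻¹ h

lemma IsLReal.one_mem_of_degOneZeros_eq_empty (hJ : IsLReal L J) (hT : degOneZeros J = ∅) :
    (1 : FreePoly g) ∈ rowIdeal J := by
  obtain ⟨r, ⟨hr1, hrJ⟩, hr⟩ :=
    exists_mem_scalarEval_eq_one (H := degLE g 1 ⊓ rowIdeal J) inf_le_left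
      fun ⟨x, hx⟩ => Set.eq_empty_iff_forall_notMem.1 hT x hx
  have h2 : r + pstar r = 1 + pstar 1 :=
    add_pstar_eq_of_scalarEval_eq hr1 one_mem_degLE_one (by simpa using hr)
  refine one_mem_rowIdeal_of_algebraMap_mem one_ne_zero
    (hJ.mem_of_add_pstar_eq ((rowIdeal J).smul_mem (1 / 2 : ℝ) hrJ) 1 Fin.elim0 ?_).1
  rw [pstar_smul, ← smul_add, h2, pstar_one, ← two_smul ℝ, smul_smul]
  simp

lemma IsPencil.mulVec_eq_zero_of_mem_kernelVectors (hL : IsPencil L) {x : Fin g → ℝ}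
    (hx : x ∈ degOneZeros J) {u : Fin ν → ℝ}
    (hu : u ∈ kernelVectors L J) : L.map (scalarEval x) *ᵥ u = 0 := by
  ext i
  rw [← scalarEval_pencilMulVec]
  exact hx _ ⟨hL.pencilMulVec_mem u i, mem_kernelVectors.1 hu i⟩

lemma lineMap_mem_degOneZeros {x y : Fin g → ℝ} (hx : x ∈ degOneZeros J)
    (hy : y ∈ degOneZeros J) (t : ℝ) : AffineMap.lineMap x y t ∈ degOneZeros J := fun p hp => by
  rw [scalarEval_lineMap hp.1, hx p hp, hy p hp, AffineMap.lineMap_same_apply]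

theorem IsLReal.one_mem_of_mem_degOneZeros (hL : IsPencil L)
    (hinf : ∀ x, ¬(L.map (scalarEval x)).PosSemidef) (hJ : IsLReal L J) {x₀ : Fin g → ℝ}
    (hx₀ : x₀ ∈ degOneZeros J) : (1 : FreePoly g) ∈ rowIdeal J := by
  obtain ⟨m, w, hw0, horth, β, hβ, hw⟩ := exists_orthogonal_sum_dotProduct_mulVec_eq
    (fun x => L.map (scalarEval x)) hL.map_scalarEval_lineMap ⟨x₀, hx₀⟩
    (fun x hx y hy => lineMap_mem_degOneZeros hx hy)
    (fun x _ => hL.isHermitian_map x) (kernelVectors L J)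
    (fun x hx u hu => hL.mulVec_eq_zero_of_mem_kernelVectors hx hu) (fun x _ => hinf x)
  set s := ∑ k, pencilForm L (w k)
  have hs_star : pstar s = s := by simp [s, hL.pstar_pencilForm]
  have hsβ : s - algebraMap ℝ (FreePoly g) β ∈ degLE g 1 :=
    Submodule.sub_mem _ (Submodule.sum_mem _ fun k _ => hL.pencilForm_mem (w k))
      (algebraMap_mem_degLE_one β)
  obtain ⟨r, ⟨hr1, hrJ⟩, hr⟩ := exists_mem_scalarEval_eq_of_common_zero inf_le_left hx₀ hsβ
    fun x hx => by simp [s, scalarEval_pencilForm, hw x hx]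
  obtain ⟨hc, hwU⟩ := hJ.mem_of_add_pstar_eq ((rowIdeal J).smul_mem (1 / 2 : ℝ) hrJ)
    (Real.sqrt (-β)) w (by
      rw [pstar_smul, ← smul_add, add_pstar_eq_of_scalarEval_eq hr1 hsβ hr, pstar_sub, hs_star,
        pstar_algebraMap, ← two_smul ℝ, smul_smul, Real.sq_sqrt (neg_nonneg.2 hβ)]
      simp only [map_neg]
      module)
  rcases hβ.lt_or_eq with hβ | rfl
  · exact one_mem_rowIdeal_of_algebraMap_mem (Real.sqrt_ne_zero'.2 (by linarith)) hc
  · exact absurd (funext fun k => dotProduct_self_eq_zero.1 (horth k _ (hwU k))) hw0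

theorem IsLReal.one_mem_rowIdeal (hL : IsPencil L)
    (hinf : ∀ x, ¬(L.map (scalarEval x)).PosSemidef) (hJ : IsLReal L J) :
    (1 : FreePoly g) ∈ rowIdeal J := by
  rcases (degOneZeros J).eq_empty_or_nonempty with hT | ⟨x₀, hx₀⟩
  · exact hJ.one_mem_of_degOneZeros_eq_empty hT
  · exact hJ.one_mem_of_mem_degOneZeros hL hinf hx₀

lemma eq_top_of_one_mem_rowIdeal (h : (1 : FreePoly g) ∈ rowIdeal J) : J = ⊤ := by
  refine eq_top_iff.2 fun p _ => ?_
  have hp : p = p 0 • fun _ => 1 := funext fun a => by simp [Subsingleton.elim a 0]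
  exact hp ▸ J.smul_mem _ (mem_rowIdeal.1 h)

end RealRadical

end

theorem lmi_infeasibility_tfae_general (g ν : ℕ)
    (L : Matrix (Fin ν) (Fin ν) (FreePoly g)) (hL : IsPencil L) :
    ((Lrad L (⊥ : Submodule (FreePoly g) (Fin 1 → FreePoly g)) = ⊤) ↔
      ¬∃ x : Fin g → ℝ,
        (evalM (fun i => Matrix.of fun _ _ : Fin 1 => x i) L).PosSemidef) ∧
    ((¬∃ x : Fin g → ℝ,
        (evalM (fun i => Matrix.of fun _ _ : Fin 1 => x i) L).PosSemidef) ↔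
      ∀ n : ℕ, 0 < n →
        ¬∃ X : Fin g → Matrix (Fin n) (Fin n) ℝ, (evalM X L).PosSemidef) := by
  refine ⟨⟨fun hrad ⟨x, hx⟩ => ?_, fun hinf => ?_⟩, hL.not_exists_posSemidef_evalM_scalar_iff⟩
  · have hle : Lrad L ⊥ ≤ evalKer x :=
      sInf_le ⟨bot_le, isLReal_evalKer ((hL.posSemidef_evalM_scalar_iff x).1 hx)⟩
    rw [hrad] at hle
    simpa using mem_evalKer.1 (hle (Submodule.mem_top (x := fun _ => 1)))
  · exact sInf_eq_top.2 fun J ⟨_, hJ⟩ => eq_top_of_one_mem_rowIdeal <|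
      hJ.one_mem_rowIdeal hL fun x hx => hinf ⟨x, (hL.posSemidef_evalM_scalar_iff x).2 hx⟩

/-- **Infeasibility of an LMI: `√[L]{0} = ℝ⟨x,x*⟩` iff `L(x) ⪰ 0` is infeasible over
`ℝ^g` iff it is infeasible over matrix tuples of every size.** -/
theorem lmi_infeasibility_tfae (g ν : ℕ) (hg : 0 < g)
    (L : Matrix (Fin ν) (Fin ν) (FreePoly g)) (hL : IsPencil L) :
    ((Lrad L (⊥ : Submodule (FreePoly g) (Fin 1 → FreePoly g)) = ⊤) ↔
      ¬∃ x : Fin g → ℝ,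
        (evalM (fun i => Matrix.of fun _ _ : Fin 1 => x i) L).PosSemidef) ∧
    ((¬∃ x : Fin g → ℝ,
        (evalM (fun i => Matrix.of fun _ _ : Fin 1 => x i) L).PosSemidef) ↔
      ∀ n : ℕ, 0 < n →
        ¬∃ X : Fin g → Matrix (Fin n) (Fin n) ℝ, (evalM X L).PosSemidef) :=
  lmi_infeasibility_tfae_general g ν L hL
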